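/- Let r ≥ 1 and let S = ℂ[α_0, α_1, β_0, β_1] be ℤ²-graded with deg α_0 = deg α_1 = (1,0) and deg β_0 = deg β_1 = (0,1) (the Cox ring of ℙ¹×ℙ¹), and let B = (α_0,α_1)·(β_0,β_1) be the irrelevant ideal. Let J = (β_0, α_0^r). Then there exists a homogeneous ideal I ⊆ S such that: dim_ℂ (S/I)_{(a,b)} = min((a+1)(b+1), r) for every (a,b) ∈ ℕ²; I ⊆ J; I_{(a,b)} = J_{(a,b)} for every (a,b) with a ≥ r−1; and (I : B^∞) = J. -/

import Mathlib

open MvPolynomial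

noncomputable section

/-- The saturation `(I : B^∞) = {f ∈ S : f·B^k ⊆ I for some k ≥ 0}`, as a set. -/
def satSet {R : Type*} [CommRing R] (I B : Ideal R) : Set R :=
  {x | ∃ k : ℕ, ∀ g ∈ B ^ k, x * g ∈ I}

/-- The Cox ring `S = ℂ[α_0,α_1,β_0,β_1]` of `ℙ¹×ℙ¹`; the `α`'s are `X (inl _)`,
the `β`'s are `X (inr _)`. -/
abbrev CoxP1P1 : Type := MvPolynomial (Fin 2 ⊕ Fin 2) ℂ

/-- The ℤ²-grading: `deg α_i = (1,0)`, `deg β_j = (0,1)`. -/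
def wP1P1 : Fin 2 ⊕ Fin 2 → ℕ × ℕ := Sum.elim (fun _ => (1, 0)) (fun _ => (0, 1))

/-- The degree-`(a,b)` component `S_{(a,b)}`. -/
def coxPiece (a b : ℕ) : Submodule ℂ CoxP1P1 :=
  weightedHomogeneousSubmodule ℂ wP1P1 (a, b)

/-- The degree-`(a,b)` graded piece `I_{(a,b)} = I ∩ S_{(a,b)}` of an ideal. -/
def idealPiece (I : Ideal CoxP1P1) (a b : ℕ) : Submodule ℂ CoxP1P1 :=
  Submodule.restrictScalars ℂ I ⊓ coxPiece a b

/-- A homogeneous ideal: `I = ⊕_{(a,b)} I_{(a,b)}`. -/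
def IsHomog (I : Ideal CoxP1P1) : Prop :=
  Submodule.restrictScalars ℂ I = ⨆ u : ℕ × ℕ, idealPiece I u.1 u.2

/-- The irrelevant ideal `B = (α_0,α_1)·(β_0,β_1)` of `ℙ¹×ℙ¹`. -/
def irrelP1P1 : Ideal CoxP1P1 :=
  Ideal.span {X (Sum.inl 0), X (Sum.inl 1)} * Ideal.span {X (Sum.inr 0), X (Sum.inr 1)}

/-!
Take for `I` the lex-segment ideal: in each bidegree `(a, b)` it is spanned by all monomials
except the `r` smallest ones in the lex order with `β₀ > β₁ > α₀ > α₁`. Ranking the monomials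
`α₀^i α₁^(a-i) β₀^k β₁^(b-k)` by `(a + 1) * k + i` identifies them with `0, …, (a+1)(b+1) - 1`,
which gives the Hilbert function; the rank is monotone in the exponents, so the monomials of
rank `≥ r` span an ideal. A `β₀`-free monomial has rank `i`, so `I ⊆ J = (β₀, α₀^r)`, and a
monomial containing `β₀` has rank at least `a + 1`; hence `I` and `J` agree in bidegrees with
`a + 1 ≥ r`, which also gives `J * B^r ⊆ I`. Conversely `α₁β₁` does not change the rank of a
`β₀`-free monomial, so `f * (α₁β₁)^k ∈ I` forces `f ∈ J`.
-/

open scoped Pointwise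

namespace MvPolynomial

variable {σ R : Type*} [CommSemiring R]

theorem mem_restrictSupportIdeal {s : Set (σ →₀ ℕ)} {hs : IsUpperSet s} {f : MvPolynomial σ R} :
    f ∈ restrictSupportIdeal R s hs ↔ ↑f.support ⊆ s :=
  Iff.rfl

theorem restrictSupportIdeal_mono {s t : Set (σ →₀ ℕ)} {hs : IsUpperSet s} {ht : IsUpperSet t}
    (h : s ⊆ t) : restrictSupportIdeal R s hs ≤ restrictSupportIdeal R t ht :=
  fun _ hf => hf.trans h

theorem span_monomial_eq_restrictSupportIdeal (s : Set (σ →₀ ℕ)) :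
    Ideal.span ((monomial · (1 : R)) '' s) =
      restrictSupportIdeal R (upperClosure s : Set (σ →₀ ℕ)) (upperClosure s).upper := by
  ext f
  rw [mem_ideal_span_monomial_image, mem_restrictSupportIdeal]
  simp [Set.subset_def, mem_upperClosure]

theorem restrictSupportIdeal_mul_le {s t u : Set (σ →₀ ℕ)} {hs : IsUpperSet s}
    {ht : IsUpperSet t} {hu : IsUpperSet u} (h : s + t ⊆ u) :
    restrictSupportIdeal R s hs * restrictSupportIdeal R t ht ≤ restrictSupportIdeal R u hu :=
  Ideal.mul_le.mpr fun _ hx _ hy =>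
    restrictSupport_mono R h (restrictSupport_add R s t ▸ Submodule.mul_mem_mul hx hy)

theorem restrictSupport_inter (s t : Set (σ →₀ ℕ)) :
    restrictSupport R (s ∩ t) = restrictSupport R s ⊓ restrictSupport R t := by
  ext f
  simp [mem_restrictSupport_iff]

theorem restrictSupport_iUnion {ι : Type*} (s : ι → Set (σ →₀ ℕ)) :
    restrictSupport R (⋃ i, s i) = ⨆ i, restrictSupport R (s i) := by
  simp_rw [restrictSupport_eq_span, Set.image_iUnion, Submodule.span_iUnion]

theorem finrank_restrictSupport [StrongRankCondition R] (s : Set (σ →₀ ℕ)) :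
    Module.finrank R (restrictSupport R s) = Nat.card s :=
  Module.finrank_eq_nat_card_basis (basisRestrictSupport R s)

theorem support_mul_monomial_one (f : MvPolynomial σ R) (e : σ →₀ ℕ) :
    (f * monomial e 1).support = f.support.map (addRightEmbedding e) :=
  AddMonoidAlgebra.support_coeff_mul_single f 1 (by simp) e

theorem isUpperSet_setOf_le_weight (w : σ → ℕ) (k : ℕ) :
    IsUpperSet {d : σ →₀ ℕ | k ≤ Finsupp.weight w d} := by
  intro d e hde hd
  obtain ⟨c, rfl⟩ := le_iff_exists_add.mp hde
  simp only [Set.mem_ofPred_eq, map_add] at hd ⊢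
  omega

theorem pow_le_restrictSupportIdeal_le_weight {I : Ideal (MvPolynomial σ R)} {w : σ → ℕ}
    (hI : I ≤ restrictSupportIdeal R _ (isUpperSet_setOf_le_weight w 1)) (k : ℕ) :
    I ^ k ≤ restrictSupportIdeal R _ (isUpperSet_setOf_le_weight w k) := by
  induction k with
  | zero => exact fun f _ _ _ => Nat.zero_le _
  | succ k ih =>
    refine (Ideal.mul_mono ih hI).trans (restrictSupportIdeal_mul_le ?_)
    rintro _ ⟨d, hd, e, he, rfl⟩
    simp only [Set.mem_ofPred_eq, map_add] at hd he ⊢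
    omega

end MvPolynomial

open Sum

lemma weight_fin_two_sum_fin_two {M : Type*} [AddCommMonoid M] (w : Fin 2 ⊕ Fin 2 → M)
    (d : Fin 2 ⊕ Fin 2 →₀ ℕ) :
    Finsupp.weight w d =
      d (inl 0) • w (inl 0) + d (inl 1) • w (inl 1) +
        (d (inr 0) • w (inr 0) + d (inr 1) • w (inr 1)) := by
  rw [Finsupp.weight_apply, Finsupp.sum_fintype _ _ (by simp), Fintype.sum_sum_type,
    Fin.sum_univ_two, Fin.sum_univ_two]

lemma weight_wP1P1 (d : Fin 2 ⊕ Fin 2 →₀ ℕ) :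
    Finsupp.weight wP1P1 d = (d (inl 0) + d (inl 1), d (inr 0) + d (inr 1)) := by
  simp [weight_fin_two_sum_fin_two, wP1P1]

lemma coxPiece_eq_restrictSupport (a b : ℕ) :
    coxPiece a b = restrictSupport ℂ {d | Finsupp.weight wP1P1 d = (a, b)} :=
  weightedHomogeneousSubmodule_eq_finsupp_supported ℂ wP1P1 (a, b)

lemma idealPiece_restrictSupportIdeal {U : Set (Fin 2 ⊕ Fin 2 →₀ ℕ)} (hU : IsUpperSet U)
    (a b : ℕ) :
    idealPiece (restrictSupportIdeal ℂ U hU) a b =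
      restrictSupport ℂ (U ∩ {d | Finsupp.weight wP1P1 d = (a, b)}) := by
  rw [idealPiece, restrictScalars_restrictSupportIdeal, coxPiece_eq_restrictSupport,
    restrictSupport_inter]

lemma isHomog_restrictSupportIdeal {U : Set (Fin 2 ⊕ Fin 2 →₀ ℕ)} (hU : IsUpperSet U) :
    IsHomog (restrictSupportIdeal ℂ U hU) := by
  have hcover : ⋃ u : ℕ × ℕ, U ∩ {d | Finsupp.weight wP1P1 d = (u.1, u.2)} = U := by
    rw [← Set.inter_iUnion, Set.inter_eq_left]
    exact fun d _ => Set.mem_iUnion.mpr ⟨_, rfl⟩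
  simp_rw [IsHomog, idealPiece_restrictSupportIdeal, ← restrictSupport_iUnion, hcover,
    restrictScalars_restrictSupportIdeal]

lemma weight_wP1P1_eq_iff {d : Fin 2 ⊕ Fin 2 →₀ ℕ} {a b : ℕ} :
    Finsupp.weight wP1P1 d = (a, b) ↔ d (inl 0) + d (inl 1) = a ∧ d (inr 0) + d (inr 1) = b := by
  rw [weight_wP1P1, Prod.mk.injEq]

def bidegreeEquiv (a b : ℕ) :
    {d : Fin 2 ⊕ Fin 2 →₀ ℕ // Finsupp.weight wP1P1 d = (a, b)} ≃ Fin (b + 1) × Fin (a + 1) where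
  toFun d :=
    have h := weight_wP1P1_eq_iff.mp d.2
    (⟨d.1 (inr 0), by omega⟩, ⟨d.1 (inl 0), by omega⟩)
  invFun p :=
    ⟨Finsupp.equivFunOnFinite.symm (Sum.elim ![p.2, a - p.2] ![p.1, b - p.1]),
      weight_wP1P1_eq_iff.mpr (by simp only [Finsupp.equivFunOnFinite_symm_apply_apply, elim_inl,
        elim_inr, Matrix.cons_val_zero, Matrix.cons_val_one, Matrix.cons_val_fin_one]; omega)⟩
  left_inv d := by
    have h := weight_wP1P1_eq_iff.mp d.2
    refine Subtype.ext (Finsupp.ext ?_)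
    simp only [Sum.forall, Fin.forall_fin_two, Finsupp.equivFunOnFinite_symm_apply_apply, elim_inl,
      elim_inr, Matrix.cons_val_zero, Matrix.cons_val_one, Matrix.cons_val_fin_one, true_and]
    omega
  right_inv p := by ext <;> simp

/-- In bidegree `(a, b)` the monomial `α₀^i α₁^(a-i) β₀^k β₁^(b-k)` is preceded by exactly
`(a + 1) * k + i` monomials in the lex order with `β₀ > β₁ > α₀ > α₁`. -/
def lexRank (d : Fin 2 ⊕ Fin 2 →₀ ℕ) : ℕ :=
  (d (inl 0) + d (inl 1) + 1) * d (inr 0) + d (inl 0)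

lemma lexRank_mono : Monotone lexRank := by
  intro d e h
  have := Finsupp.le_def.mp h
  unfold lexRank
  gcongr <;> exact this _

lemma lexRank_of_eq_zero {d : Fin 2 ⊕ Fin 2 →₀ ℕ} (h : d (inr 0) = 0) :
    lexRank d = d (inl 0) := by
  simp [lexRank, h]

lemma add_one_le_lexRank {d : Fin 2 ⊕ Fin 2 →₀ ℕ} (h : d (inr 0) ≠ 0) :
    d (inl 0) + d (inl 1) + 1 ≤ lexRank d :=
  (Nat.le_mul_of_pos_right _ (Nat.pos_of_ne_zero h)).trans (Nat.le_add_right _ _)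

def lexRankEquiv (a b : ℕ) :
    {d : Fin 2 ⊕ Fin 2 →₀ ℕ // Finsupp.weight wP1P1 d = (a, b)} ≃ Fin ((b + 1) * (a + 1)) :=
  (bidegreeEquiv a b).trans finProdFinEquiv

lemma lexRankEquiv_apply {a b : ℕ}
    (d : {d : Fin 2 ⊕ Fin 2 →₀ ℕ // Finsupp.weight wP1P1 d = (a, b)}) :
    (lexRankEquiv a b d : ℕ) = lexRank d := by
  have ha := (weight_wP1P1_eq_iff.mp d.2).1
  simp only [lexRankEquiv, bidegreeEquiv, Equiv.trans_apply, Equiv.coe_fn_mk,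
    finProdFinEquiv_apply_val, lexRank, ha]
  ring

lemma card_bidegree (a b : ℕ) :
    Nat.card {d : Fin 2 ⊕ Fin 2 →₀ ℕ | Finsupp.weight wP1P1 d = (a, b)} = (b + 1) * (a + 1) :=
  (Nat.card_congr (lexRankEquiv a b)).trans (Nat.card_fin _)

lemma card_bidegree_le_lexRank (r a b : ℕ) :
    Nat.card ↥({d | r ≤ lexRank d} ∩ {d | Finsupp.weight wP1P1 d = (a, b)}) =
      (b + 1) * (a + 1) - min ((b + 1) * (a + 1)) r := by
  calc Nat.card ↥({d | r ≤ lexRank d} ∩ {d | Finsupp.weight wP1P1 d = (a, b)})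
      = Nat.card {d : {d : Fin 2 ⊕ Fin 2 →₀ ℕ // Finsupp.weight wP1P1 d = (a, b)} //
          r ≤ lexRank d} :=
        Nat.card_congr ((Equiv.subtypeSubtypeEquivSubtypeInter _ _).trans
          (Equiv.subtypeEquivRight fun _ => and_comm)).symm
    _ = Nat.card {t : Fin ((b + 1) * (a + 1)) // ¬ (t : ℕ) < r} :=
        Nat.card_congr ((lexRankEquiv a b).subtypeEquiv fun d => by rw [lexRankEquiv_apply, not_lt])
    _ = (b + 1) * (a + 1) - min ((b + 1) * (a + 1)) r := by
        rw [Nat.card_eq_fintype_card, Fintype.card_subtype_compl, Fintype.card_subtype,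
          Fin.card_filter_val_lt, Fintype.card_fin]

lemma isUpperSet_le_lexRank (r : ℕ) : IsUpperSet {d | r ≤ lexRank d} :=
  fun _ _ h hd => hd.trans (lexRank_mono h)

def lexIdeal (r : ℕ) : Ideal CoxP1P1 :=
  restrictSupportIdeal ℂ _ (isUpperSet_le_lexRank r)

lemma finrank_coxPiece_sub_finrank_idealPiece_lexIdeal (r a b : ℕ) :
    Module.finrank ℂ (coxPiece a b) - Module.finrank ℂ (idealPiece (lexIdeal r) a b) =
      min ((a + 1) * (b + 1)) r := by
  rw [lexIdeal, coxPiece_eq_restrictSupport, idealPiece_restrictSupportIdeal,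
    finrank_restrictSupport, finrank_restrictSupport, card_bidegree, card_bidegree_le_lexRank,
    Nat.sub_sub_self (min_le_left _ _), mul_comm]

lemma isUpperSet_J_support (r : ℕ) :
    IsUpperSet {d : Fin 2 ⊕ Fin 2 →₀ ℕ | 1 ≤ d (inr 0) ∨ r ≤ d (inl 0)} := by
  intro d e h hd
  have := Finsupp.le_def.mp h
  exact hd.imp (fun hd => hd.trans (this _)) (fun hd => hd.trans (this _))

lemma span_J_eq_restrictSupportIdeal (r : ℕ) :
    Ideal.span {X (inr 0), X (inl 0) ^ r} =
      restrictSupportIdeal ℂ _ (isUpperSet_J_support r) := by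
  rw [X_pow_eq_monomial, X, ← Set.image_pair (monomial · (1 : ℂ)),
    span_monomial_eq_restrictSupportIdeal]
  congr
  ext d
  simp [mem_upperClosure, Finsupp.single_le_iff]

lemma lexIdeal_le_J (r : ℕ) : lexIdeal r ≤ Ideal.span {X (inr 0), X (inl 0) ^ r} := by
  rw [span_J_eq_restrictSupportIdeal]
  refine restrictSupportIdeal_mono fun d (hd : r ≤ lexRank d) => ?_
  by_cases h : d (inr 0) = 0
  · exact Or.inr (lexRank_of_eq_zero h ▸ hd)
  · exact Or.inl (Nat.one_le_iff_ne_zero.mpr h)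

lemma idealPiece_lexIdeal_eq_J {r a : ℕ} (ha : r - 1 ≤ a) (b : ℕ) :
    idealPiece (lexIdeal r) a b = idealPiece (Ideal.span {X (inr 0), X (inl 0) ^ r}) a b := by
  rw [span_J_eq_restrictSupportIdeal, lexIdeal, idealPiece_restrictSupportIdeal,
    idealPiece_restrictSupportIdeal]
  congr 1
  ext d
  simp only [Set.mem_inter_iff, Set.mem_ofPred_eq, weight_wP1P1_eq_iff, and_congr_left_iff]
  rintro ⟨hda, -⟩
  by_cases h : d (inr 0) = 0
  · simp [lexRank_of_eq_zero h, h]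
  · have := add_one_le_lexRank h
    omega

lemma weight_fst_wP1P1 (d : Fin 2 ⊕ Fin 2 →₀ ℕ) :
    Finsupp.weight (fun i => (wP1P1 i).1) d = d (inl 0) + d (inl 1) := by
  simp [weight_fin_two_sum_fin_two, wP1P1]

lemma irrelP1P1_pow_le (k : ℕ) :
    irrelP1P1 ^ k ≤
      restrictSupportIdeal ℂ _ (isUpperSet_setOf_le_weight (fun i => (wP1P1 i).1) k) := by
  refine pow_le_restrictSupportIdeal_le_weight (Ideal.mul_le_left.trans ?_) k
  rw [Ideal.span_le, Set.pair_subset_iff]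
  constructor <;> exact (monomial_mem_restrictSupport ℂ).mpr (.inl (by simp [weight_fst_wP1P1]))

lemma J_mul_irrelP1P1_pow_le (r : ℕ) :
    Ideal.span {X (inr 0), X (inl 0) ^ r} * irrelP1P1 ^ r ≤ lexIdeal r := by
  rw [span_J_eq_restrictSupportIdeal]
  refine (Ideal.mul_mono_right (irrelP1P1_pow_le r)).trans (restrictSupportIdeal_mul_le ?_)
  rintro _ ⟨d, hd, e, he, rfl⟩
  simp only [Set.mem_ofPred_eq, weight_fst_wP1P1] at hd he ⊢
  by_cases h : (d + e) (inr 0) = 0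
  · rw [lexRank_of_eq_zero h]
    simp only [Finsupp.add_apply] at h ⊢
    omega
  · have := add_one_le_lexRank h
    simp only [Finsupp.add_apply] at this
    omega

lemma mem_J_of_mul_pow_mem_lexIdeal {r k : ℕ} {f : CoxP1P1}
    (hf : f * (X (inl 1) * X (inr 1)) ^ k ∈ lexIdeal r) :
    f ∈ Ideal.span {X (inr 0), X (inl 0) ^ r} := by
  set e : Fin 2 ⊕ Fin 2 →₀ ℕ := Finsupp.single (inl 1) k + Finsupp.single (inr 1) k
  have hmon : (X (inl 1) * X (inr 1) : CoxP1P1) ^ k = monomial e 1 := by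
    rw [mul_pow, X_pow_eq_monomial, X_pow_eq_monomial, monomial_mul, one_mul]
  rw [hmon, lexIdeal, mem_restrictSupportIdeal, support_mul_monomial_one] at hf
  rw [span_J_eq_restrictSupportIdeal, mem_restrictSupportIdeal]
  intro m hm
  have hme : r ≤ lexRank (m + e) := hf (Finset.mem_map_of_mem _ hm)
  by_cases h : m (inr 0) = 0
  · refine Or.inr ?_
    rwa [lexRank_of_eq_zero (by simp [e, h]), Finsupp.add_apply, add_eq_left.mpr (by simp [e])]
      at hme
  · exact Or.inl (Nat.one_le_iff_ne_zero.mpr h)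

lemma satSet_lexIdeal (r : ℕ) :
    satSet (lexIdeal r) irrelP1P1 =
      ((Ideal.span {X (inr 0), X (inl 0) ^ r} : Ideal CoxP1P1) : Set CoxP1P1) := by
  ext f
  constructor
  · rintro ⟨k, hk⟩
    refine mem_J_of_mul_pow_mem_lexIdeal (hk _ (Ideal.pow_mem_pow ?_ k))
    exact Ideal.mul_mem_mul (Ideal.subset_span (by simp)) (Ideal.subset_span (by simp))
  · exact fun hf => ⟨r, fun g hg => J_mul_irrelP1P1_pow_le r (Ideal.mul_mem_mul hf hg)⟩

theorem exists_ideal_with_saturation_J_general (r : ℕ) :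
    ∃ I : Ideal CoxP1P1,
      IsHomog I ∧
      (∀ a b : ℕ,
        Module.finrank ℂ ↥(coxPiece a b) - Module.finrank ℂ ↥(idealPiece I a b) =
          min ((a + 1) * (b + 1)) r) ∧
      I ≤ Ideal.span {X (Sum.inr 0), (X (Sum.inl 0))^r} ∧
      (∀ a b : ℕ, r - 1 ≤ a →
        idealPiece I a b = idealPiece (Ideal.span {X (Sum.inr 0), (X (Sum.inl 0))^r}) a b) ∧
      satSet I irrelP1P1 =
        ((Ideal.span {X (Sum.inr 0), (X (Sum.inl 0))^r} : Ideal CoxP1P1) : Set CoxP1P1) :=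
  ⟨lexIdeal r, isHomog_restrictSupportIdeal _, finrank_coxPiece_sub_finrank_idealPiece_lexIdeal r,
    lexIdeal_le_J r, fun _ b ha => idealPiece_lexIdeal_eq_J ha b, satSet_lexIdeal r⟩

/-- For every `r ≥ 1` there is a homogeneous ideal `I` with Hilbert function
`min((a+1)(b+1), r)`, contained in `J = (β_0, α_0^r)`, agreeing with `J` in all degrees `(a,b)`
with `a ≥ r−1`, and with saturation `J`. -/
theorem exists_ideal_with_saturation_J (r : ℕ) (hr : 1 ≤ r) :
    ∃ I : Ideal CoxP1P1,
      IsHomog I ∧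
      (∀ a b : ℕ,
        Module.finrank ℂ ↥(coxPiece a b) - Module.finrank ℂ ↥(idealPiece I a b) =
          min ((a + 1) * (b + 1)) r) ∧
      I ≤ Ideal.span {X (Sum.inr 0), (X (Sum.inl 0))^r} ∧
      (∀ a b : ℕ, r - 1 ≤ a →
        idealPiece I a b = idealPiece (Ideal.span {X (Sum.inr 0), (X (Sum.inl 0))^r}) a b) ∧
      satSet I irrelP1P1 =
        ((Ideal.span {X (Sum.inr 0), (X (Sum.inl 0))^r} : Ideal CoxP1P1) : Set CoxP1P1) :=
  exists_ideal_with_saturation_J_general r
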